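/- arXiv:2601.04987 — 2 statements merged into one kernel-verified Lean document; each statement's English description precedes it below -/
import Mathlib

section
/- Let E ⊆ 𝕋 be a Carleson set of Lebesgue measure zero and let α ∈ (0,1/2). Then for every ζ ∈ 𝕋∖E, D_{ζ, Γ(ζ,E)}(f_{α,E}) ≲ dist(ζ,E)^{2α} · ∫_{Γ(ζ,E)} log(dist(ζ,E)/dist(ζ',E)) |dζ'|/|ζ−ζ'|². -/
open MeasureTheory Real Set

noncomputable section

/-- The unit circle in `ℂ`. -/
def circleT : Set ℂ := Metric.sphere (0 : ℂ) 1

/-- Arc-length parametrization of the unit circle. -/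
def cpt (θ : ℝ) : ℂ := Complex.exp (θ * Complex.I)

/-- Distance from a point to a set. -/
def dE (E : Set ℂ) (ζ : ℂ) : ℝ := Metric.infDist ζ E

/-- Arc-length integral over the whole circle. -/
def circInt (f : ℂ → ℝ) : ℝ := ∫ θ in Set.Ioc 0 (2 * π), f (cpt θ)

/-- Arc-length integral over a subset `Λ` of the circle. -/
def circIntOn (Λ : Set ℂ) (f : ℂ → ℝ) : ℝ :=
  ∫ θ in {θ ∈ Set.Ioc 0 (2 * π) | cpt θ ∈ Λ}, f (cpt θ)

/-- `E` has arc-length (Lebesgue) measure zero. -/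
def MeasureZeroOnCircle (E : Set ℂ) : Prop :=
  volume {θ ∈ Set.Ioc 0 (2 * π) | cpt θ ∈ E} = 0

/-- `E` is a Carleson set: `∫_𝕋 log dist(ζ,E) |dζ| > -∞`. -/
def CarlesonSet (E : Set ℂ) : Prop :=
  IntegrableOn (fun θ => Real.log (dE E (cpt θ))) (Set.Ioc 0 (2 * π)) volume

/-- `I(ζ,E)`: the connected component of `𝕋 \ E` containing `ζ`. -/
def compArc (E : Set ℂ) (ζ : ℂ) : Set ℂ := connectedComponentIn (circleT \ E) ζ

/-- `Γ(ζ,E)`. -/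
def GammaSet (E : Set ℂ) (ζ : ℂ) : Set ℂ :=
  {ζ' ∈ circleT \ compArc E ζ | dE E ζ' ≤ dE E ζ}

/-- `Σ(ζ,E)`. -/
def SigmaSet (E : Set ℂ) (ζ : ℂ) : Set ℂ :=
  {ζ' ∈ circleT \ compArc E ζ | dE E ζ ≤ dE E ζ'}

/-- The Richter–Sundberg integrand for the outer function with boundary modulus
`ω(dist(·,E))`. -/
def RSker (ω : ℝ → ℝ) (E : Set ℂ) (ζ ζ' : ℂ) : ℝ :=
  ((ω (dE E ζ')) ^ 2 - (ω (dE E ζ)) ^ 2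
    - 2 * (ω (dE E ζ)) ^ 2 * Real.log (ω (dE E ζ') / ω (dE E ζ))) / ‖ζ - ζ'‖ ^ 2

/-- Local Dirichlet integral `D_ζ(f_{ω,E})` (Richter–Sundberg formula). -/
def locDir (ω : ℝ → ℝ) (E : Set ℂ) (ζ : ℂ) : ℝ :=
  (1 / (2 * π)) * circInt (fun ζ' => RSker ω E ζ ζ')

/-- Local Dirichlet integral restricted to `Λ`. -/
def locDirOn (ω : ℝ → ℝ) (E : Set ℂ) (Λ : Set ℂ) (ζ : ℂ) : ℝ :=
  (1 / (2 * π)) * circIntOn Λ (fun ζ' => RSker ω E ζ ζ')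

/-- `E` is an `𝓛₁`-set. -/
def L1Set (E : Set ℂ) : Prop :=
  ∃ C > 0, ∀ ζ ∈ circleT \ E,
    circIntOn (GammaSet E ζ)
      (fun ζ' => Real.log (dE E ζ / dE E ζ') / ‖ζ - ζ'‖ ^ 2) ≤ C / dE E ζ

/-- The `𝓛₂` inequality with constant `C`. -/
def L2With (E : Set ℂ) (C : ℝ) : Prop :=
  ∀ ζ ∈ circleT \ E,
    circIntOn (GammaSet E ζ)
      (fun ζ' => (Real.log (dE E ζ / dE E ζ')) ^ 2 / ‖ζ - ζ'‖ ^ 2) ≤ C / dE E ζ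

/-- `E` is an `𝓛₂`-set. -/
def L2Set (E : Set ℂ) : Prop := ∃ C > 0, L2With E C

/-- Supremum of `dist(·,E)` over the arc `cpt '' (a,b]`. -/
def arcSup (E : Set ℂ) (a b : ℝ) : ℝ := sSup ((fun θ => dE E (cpt θ)) '' Set.Ioc a b)

/-- `E` is a `𝒦`-set (Kotochigov). -/
def KSet (E : Set ℂ) : Prop :=
  ∃ c > 0, ∀ a b : ℝ, a < b → b ≤ a + 2 * π → c * (b - a) ≤ arcSup E a b

/-- Integral of a weight over the arc `cpt '' (a,b]` (with respect to arc length). -/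
def arcInt (w : ℂ → ℝ) (a b : ℝ) : ℝ := ∫ θ in Set.Ioc a b, w (cpt θ)

/-- Double logarithmic integral of a weight over an arc. -/
def arcDouble (w : ℂ → ℝ) (a b : ℝ) : ℝ :=
  ∫ θ in Set.Ioc a b, (∫ θ' in Set.Ioc a b,
    Real.log (1 / ‖cpt θ - cpt θ'‖) * w (cpt θ) * w (cpt θ'))

/-- Arc-length measure of `{ζ ∈ I : dist(ζ,E) ≤ t}` for the arc `cpt '' (a,b]`. -/
def sublevelMeas (E : Set ℂ) (a b t : ℝ) : ℝ :=
  (volume {θ ∈ Set.Ioc a b | dE E (cpt θ) ≤ t}).toReal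

/-- Arc-length measure of `E_t = {ζ ∈ 𝕋 : dist(ζ,E) ≤ t}`. -/
def EtMeas (E : Set ℂ) (t : ℝ) : ℝ := sublevelMeas E 0 (2 * π) t

/-- The open unit disc. -/
def unitDisc : Set ℂ := Metric.ball (0 : ℂ) 1

/-- Membership in the (holomorphic) Dirichlet space `𝒟`. -/
def MemDirichlet (f : ℂ → ℂ) : Prop :=
  DifferentiableOn ℂ f unitDisc ∧
  (∃ M : ℝ, ∀ r ∈ Set.Ioo (0 : ℝ) 1,
    (∫ θ in Set.Ioc 0 (2 * π), ‖f ((r : ℂ) * cpt θ)‖ ^ 2) ≤ M) ∧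
  IntegrableOn (fun z => ‖deriv f z‖ ^ 2) unitDisc volume

/-- `f` is a multiplier of the Dirichlet space `𝒟`. -/
def IsMultiplierD (f : ℂ → ℂ) : Prop :=
  ∀ g : ℂ → ℂ, MemDirichlet g → MemDirichlet (fun z => f z * g z)

/-- The outer function `f_{ω,E}` with boundary modulus `ω(dist(·,E))`. -/
def outerFun (ω : ℝ → ℝ) (E : Set ℂ) (z : ℂ) : ℂ :=
  Complex.exp ((((2 * π)⁻¹ : ℝ) : ℂ) * ∫ θ in Set.Ioc 0 (2 * π),
    ((cpt θ + z) / (cpt θ - z)) * ((Real.log (ω (dE E (cpt θ))) : ℝ) : ℂ))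

/-- `log ω(dist(·,E)) ∈ L¹(𝕋)`. -/
def LogOmegaInt (ω : ℝ → ℝ) (E : Set ℂ) : Prop :=
  IntegrableOn (fun θ => Real.log (ω (dE E (cpt θ)))) (Set.Ioc 0 (2 * π)) volume

/-- Standing hypotheses on `ω` (with derivative `ω'`): continuous, positive, increasing on
`(0,π]`, differentiable with derivative `ω'`, `t ↦ ω(t^γ)` concave, and `t ↦ tω'(t)/ω(t)`
increasing. -/
def OmegaHyp (ω ω' : ℝ → ℝ) (γ : ℝ) : Prop :=
  ContinuousOn ω (Set.Ioc 0 π) ∧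
  (∀ t ∈ Set.Ioc (0 : ℝ) π, 0 < ω t) ∧
  MonotoneOn ω (Set.Ioc 0 π) ∧
  (∀ t ∈ Set.Ioo (0 : ℝ) π, HasDerivAt ω (ω' t) t) ∧
  ConcaveOn ℝ (Set.Ioc 0 (π ^ γ⁻¹)) (fun t => ω (t ^ γ)) ∧
  MonotoneOn (fun t => t * ω' t / ω t) (Set.Ioo 0 π)

/-- The generalized Cantor set `E_{(ζ_n)}` (with `ξ k` playing the role of `ζ_{k+1}`). -/
def gCantorSet (ξ : ℕ → ℝ) : Set ℂ :=
  {z | ∃ ε : ℕ → Bool, z = Complex.exp (((2 * π : ℝ) : ℂ) * Complex.I *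
    ((∑' n : ℕ, (if ε n then (1 : ℝ) else 0) * (∏ k ∈ Finset.range n, ξ k) * (1 - ξ n) : ℝ) : ℂ))}

end

/-!
For `ζ' ∈ Γ(ζ,E)` write `δ = dist(ζ,E)` and `δ' = dist(ζ',E) ≤ δ`. Since `ζ'` lies outside
`I(ζ,E)`, the short arc from `ζ` to `ζ'` must meet `E`, and that arc stays within `|ζ - ζ'|` of
`ζ`; hence `|ζ - ζ'| ≥ δ`. With `p = δ'^α ≤ q = δ^α`, the Richter–Sundberg numerator
`p² - q² - 2q² log(p/q)` lies between `0` (as `log x ≤ x - 1`) and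
`2q² log(q/p) = 2α δ^{2α} log(δ/δ')`, which gives the bound with constant `α/π`. The Carleson
condition and `|ζ - ζ'| ≥ δ` make the right-hand integrand integrable, and `E` being null lets
the pointwise bounds hold almost everywhere on `Γ(ζ,E)`.
-/

open Complex in
theorem norm_exp_I_mul_ofReal_sub_one_le_of_abs_le {s t : ℝ} (hts : |t| ≤ |s|) (hs : |s| ≤ π) :
    ‖exp (I * t) - 1‖ ≤ ‖exp (I * s) - 1‖ := by
  have hcos : Real.cos s ≤ Real.cos t := by
    rw [← Real.cos_abs s, ← Real.cos_abs t]
    exact Real.cos_le_cos_of_nonneg_of_le_pi (abs_nonneg t) hs hts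
  have hsin_sq (x : ℝ) : Real.sin (x / 2) ^ 2 = 1 / 2 - Real.cos x / 2 := by
    rw [Real.sin_sq, Real.cos_sq, mul_div_cancel₀ x two_ne_zero]; ring
  have hsin : |Real.sin (t / 2)| ≤ |Real.sin (s / 2)| := by
    rw [← sq_le_sq, hsin_sq, hsin_sq]; linarith
  simp only [norm_exp_I_mul_ofReal_sub_one, norm_mul, Real.norm_eq_abs]
  gcongr

open Complex in
theorem exists_isPreconnected_subset_circleT_inter_closedBall {ζ ζ' : ℂ} (hζ : ‖ζ‖ = 1)
    (hζ' : ‖ζ'‖ = 1) :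
    ∃ A : Set ℂ, IsPreconnected A ∧ ζ ∈ A ∧ ζ' ∈ A ∧
      A ⊆ circleT ∩ Metric.closedBall ζ ‖ζ' - ζ‖ := by
  have hζ0 : ζ ≠ 0 := norm_ne_zero_iff.1 (by rw [hζ]; exact one_ne_zero)
  set s := arg (ζ' / ζ)
  have hs : exp (I * s) = ζ' / ζ := by
    have := norm_mul_exp_arg_mul_I (ζ' / ζ)
    rwa [norm_div, hζ, hζ', div_one, ofReal_one, one_mul, mul_comm] at this
  have hspi : |s| ≤ π := abs_le.2 ⟨(neg_pi_lt_arg _).le, arg_le_pi _⟩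
  have hsub (x : ℝ) : ζ * exp (I * x) - ζ = ζ * (exp (I * x) - 1) := by ring
  refine ⟨(fun u : ℝ => ζ * exp (I * (u * s : ℝ))) '' Icc 0 1,
    isPreconnected_Icc.image _ (by fun_prop), ⟨0, by simp, by simp⟩,
    ⟨1, by simp, by simp [hs, mul_div_cancel₀ _ hζ0]⟩, ?_⟩
  rintro _ ⟨u, hu, rfl⟩
  have hnorm : ‖exp (I * (u * s : ℝ))‖ = 1 := norm_exp_I_mul_ofReal _
  refine ⟨by simp only [circleT, mem_sphere_zero_iff_norm, norm_mul, hζ, hnorm, one_mul], ?_⟩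
  have hζ'ζ : ζ' - ζ = ζ * (exp (I * s) - 1) := by
    rw [hs, mul_sub, mul_div_cancel₀ _ hζ0, mul_one]
  rw [Metric.mem_closedBall, dist_eq_norm, hsub, hζ'ζ, norm_mul, norm_mul, hζ, one_mul, one_mul]
  refine norm_exp_I_mul_ofReal_sub_one_le_of_abs_le ?_ hspi
  rw [abs_mul]
  exact mul_le_of_le_one_left (abs_nonneg s) (abs_le.2 ⟨by linarith [hu.1], hu.2⟩)

theorem dE_le_norm_sub_of_notMem_compArc {E : Set ℂ} {ζ ζ' : ℂ} (hζ : ζ ∈ circleT \ E)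
    (hζ' : ζ' ∈ circleT) (hnc : ζ' ∉ compArc E ζ) : dE E ζ ≤ ‖ζ - ζ'‖ := by
  by_contra! h
  obtain ⟨A, hA, hζA, hζ'A, hAsub⟩ := exists_isPreconnected_subset_circleT_inter_closedBall
    (by simpa [circleT] using hζ.1) (by simpa [circleT] using hζ')
  refine hnc (hA.subset_connectedComponentIn hζA (fun z hz => ?_) hζ'A)
  refine ⟨(hAsub hz).1, fun hzE => ?_⟩
  have hzζ : dist z ζ ≤ ‖ζ' - ζ‖ := (hAsub hz).2
  have hδ : dE E ζ ≤ dist ζ z := Metric.infDist_le_dist_of_mem hzE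
  rw [dist_comm, norm_sub_rev] at hzζ
  linarith

theorem sq_sub_sq_sub_mul_log_div_nonneg {p q : ℝ} (hp : 0 < p) (hq : 0 < q) :
    0 ≤ p ^ 2 - q ^ 2 - 2 * q ^ 2 * log (p / q) := by
  have hlog : 2 * q ^ 2 * log (p / q) ≤ 2 * q ^ 2 * (p / q - 1) :=
    mul_le_mul_of_nonneg_left (log_le_sub_one_of_pos (div_pos hp hq)) (by positivity)
  have hq' : 2 * q ^ 2 * (p / q - 1) = 2 * p * q - 2 * q ^ 2 := by field_simp
  nlinarith [sq_nonneg (p - q)]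

theorem sq_sub_sq_sub_mul_log_div_le {p q : ℝ} (hp : 0 < p) (hpq : p ≤ q) :
    p ^ 2 - q ^ 2 - 2 * q ^ 2 * log (p / q) ≤ 2 * q ^ 2 * log (q / p) := by
  rw [← inv_div, log_inv]
  nlinarith

theorem RSker_rpow_nonneg_and_le {E : Set ℂ} {ζ ζ' : ℂ} {α : ℝ} (hα : 0 < α)
    (hδ' : 0 < dE E ζ') (hle : dE E ζ' ≤ dE E ζ) :
    0 ≤ RSker (fun t => t ^ α) E ζ ζ' ∧
      RSker (fun t => t ^ α) E ζ ζ' ≤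
        2 * α * dE E ζ ^ (2 * α) * (log (dE E ζ / dE E ζ') / ‖ζ - ζ'‖ ^ 2) := by
  simp only [RSker]
  set δ := dE E ζ
  set δ' := dE E ζ'
  have hδ : 0 < δ := hδ'.trans_le hle
  have hsq : (δ ^ α) ^ 2 = δ ^ (2 * α) := by
    rw [← rpow_natCast, ← rpow_mul hδ.le, mul_comm]; norm_num
  have hlog : log (δ ^ α / δ' ^ α) = α * log (δ / δ') := by
    rw [← div_rpow hδ.le hδ'.le, log_rpow (div_pos hδ hδ')]
  have hp : 0 < δ' ^ α := rpow_pos_of_pos hδ' α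
  refine ⟨div_nonneg (sq_sub_sq_sub_mul_log_div_nonneg hp (rpow_pos_of_pos hδ α)) (sq_nonneg _), ?_⟩
  have hnum := sq_sub_sq_sub_mul_log_div_le hp (rpow_le_rpow hδ'.le hle hα.le)
  rw [hsq, hlog] at hnum
  rw [hsq, mul_div_assoc', show 2 * α * δ ^ (2 * α) * log (δ / δ') =
    2 * δ ^ (2 * α) * (α * log (δ / δ')) by ring]
  gcongr

theorem log_div_div_sq_le {δ δ' d : ℝ} (hδ' : 0 < δ') (hle : δ' ≤ δ) (hd : δ ≤ d) :
    log (δ / δ') / d ^ 2 ≤ (|log δ| + |log δ'|) / δ ^ 2 := by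
  have hδ : 0 < δ := hδ'.trans_le hle
  calc log (δ / δ') / d ^ 2 ≤ log (δ / δ') / δ ^ 2 := by
        gcongr
        exact log_nonneg ((one_le_div hδ').2 hle)
    _ ≤ (|log δ| + |log δ'|) / δ ^ 2 := by
        rw [log_div hδ.ne' hδ'.ne']
        gcongr
        linarith [le_abs_self (log δ), neg_abs_le (log δ')]

theorem ae_restrict_of_forall_cpt_notMem {E : Set ℂ} (hEz : MeasureZeroOnCircle E) {S : Set ℝ}
    (hS : S ⊆ Ioc 0 (2 * π)) {P : ℝ → Prop} (hP : MeasurableSet {θ | P θ})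
    (h : ∀ θ ∈ S, cpt θ ∉ E → P θ) : ∀ᵐ θ ∂volume.restrict S, P θ := by
  rw [ae_restrict_iff hP]
  filter_upwards [measure_eq_zero_iff_ae_notMem.1 hEz] with θ hθ hθS
  exact h θ hθS fun hE => hθ ⟨hS hθS, hE⟩

theorem locDirOn_GammaSet_rpow_le {E : Set ℂ} (hEc : IsClosed E) (hEz : MeasureZeroOnCircle E)
    (hEcar : CarlesonSet E) {α : ℝ} (hα : 0 < α) {ζ : ℂ} (hζ : ζ ∈ circleT \ E) :
    locDirOn (fun t => t ^ α) E (GammaSet E ζ) ζ ≤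
      α / π * (dE E ζ ^ (2 * α) *
        circIntOn (GammaSet E ζ) (fun ζ' => log (dE E ζ / dE E ζ') / ‖ζ - ζ'‖ ^ 2)) := by
  rcases E.eq_empty_or_nonempty with rfl | hE
  · -- `Metric.infDist ζ ∅ = 0`, so both sides vanish.
    simp [locDirOn, circIntOn, RSker, dE, zero_rpow hα.ne']
  set δ := dE E ζ
  have hδ : 0 < δ := (hEc.notMem_iff_infDist_pos hE).1 hζ.2
  set S := {θ ∈ Ioc 0 (2 * π) | cpt θ ∈ GammaSet E ζ}
  have hS : S ⊆ Ioc 0 (2 * π) := fun θ hθ => hθ.1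
  set F := fun θ => RSker (fun t => t ^ α) E ζ (cpt θ)
  set G := fun θ => log (δ / dE E (cpt θ)) / ‖ζ - cpt θ‖ ^ 2
  set H := fun θ => (|log δ| + |log (dE E (cpt θ))|) / δ ^ 2
  have hF : Measurable F := by unfold F RSker dE cpt; fun_prop
  have hG : Measurable G := by unfold G dE cpt; fun_prop
  have hH : Measurable H := by unfold H dE cpt; fun_prop
  have hbounds : ∀ θ ∈ S, cpt θ ∉ E →
      0 ≤ F θ ∧ F θ ≤ 2 * α * δ ^ (2 * α) * G θ ∧ 0 ≤ G θ ∧ G θ ≤ H θ := by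
    intro θ ⟨_, hΓ, hle⟩ hθE
    have hδ' : 0 < dE E (cpt θ) := (hEc.notMem_iff_infDist_pos hE).1 hθE
    have hd : δ ≤ ‖ζ - cpt θ‖ := dE_le_norm_sub_of_notMem_compArc hζ hΓ.1 hΓ.2
    obtain ⟨hF0, hFG⟩ := RSker_rpow_nonneg_and_le hα hδ' hle
    exact ⟨hF0, hFG, div_nonneg (log_nonneg ((one_le_div hδ').2 hle)) (sq_nonneg _),
      log_div_div_sq_le hδ' hle hd⟩
  have hae {P : ℝ → Prop} (hP : MeasurableSet {θ | P θ})
      (h : ∀ θ ∈ S, cpt θ ∉ E → P θ) : ∀ᵐ θ ∂volume.restrict S, P θ :=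
    ae_restrict_of_forall_cpt_notMem hEz hS hP h
  have hHint : IntegrableOn H S :=
    IntegrableOn.mono_set
      (((integrableOn_const measure_Ioc_lt_top.ne).add hEcar.abs).div_const _) hS
  have hGint : IntegrableOn G S := hHint.mono' hG.aestronglyMeasurable <|
    hae (measurableSet_le hG.norm hH) fun θ hθ hθE => by
      obtain ⟨-, -, hG0, hGH⟩ := hbounds θ hθ hθE
      rwa [Real.norm_eq_abs, abs_of_nonneg hG0]
  have hFG : ∫ θ in S, F θ ≤ 2 * α * δ ^ (2 * α) * ∫ θ in S, G θ := by
    rw [← integral_const_mul]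
    refine integral_mono_of_nonneg (hae (measurableSet_le measurable_const hF)
      fun θ hθ hθE => (hbounds θ hθ hθE).1) (hGint.const_mul _)
      (hae (measurableSet_le hF (hG.const_mul _)) fun θ hθ hθE => (hbounds θ hθ hθE).2.1)
  calc locDirOn (fun t => t ^ α) E (GammaSet E ζ) ζ = (2 * π)⁻¹ * ∫ θ in S, F θ := by
        rw [locDirOn, circIntOn, one_div]
    _ ≤ (2 * π)⁻¹ * (2 * α * δ ^ (2 * α) * ∫ θ in S, G θ) := by gcongr
    _ = α / π * (δ ^ (2 * α) * ∫ θ in S, G θ) := by field_simp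

theorem statement5_general (E : Set ℂ) (hEc : IsClosed E)
    (hEz : MeasureZeroOnCircle E) (hEcar : CarlesonSet E)
    (α : ℝ) (hα : α ∈ Set.Ioo (0:ℝ) (1/2)) :
    ∃ C > (0:ℝ), ∀ ζ ∈ circleT \ E,
      locDirOn (fun t => t ^ α) E (GammaSet E ζ) ζ ≤
        C * (dE E ζ ^ (2 * α) *
          circIntOn (GammaSet E ζ)
            (fun ζ' => Real.log (dE E ζ / dE E ζ') / ‖ζ - ζ'‖ ^ 2)) :=
  ⟨α / π, div_pos hα.1 pi_pos, fun _ hζ => locDirOn_GammaSet_rpow_le hEc hEz hEcar hα.1 hζ⟩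

/-- For a Carleson set `E` of measure zero and `α ∈ (0,1/2)`,
`D_{ζ,Γ(ζ,E)}(f_{α,E}) ≲ dist(ζ,E)^{2α} ·
∫_{Γ(ζ,E)} log(dist(ζ,E)/dist(ζ',E)) |dζ'|/|ζ−ζ'|²` for all `ζ ∈ 𝕋∖E`. -/
theorem statement5 (E : Set ℂ) (hEc : IsClosed E) (hEsub : E ⊆ circleT)
    (hEz : MeasureZeroOnCircle E) (hEcar : CarlesonSet E)
    (α : ℝ) (hα : α ∈ Set.Ioo (0:ℝ) (1/2)) :
    ∃ C > (0:ℝ), ∀ ζ ∈ circleT \ E,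
      locDirOn (fun t => t ^ α) E (GammaSet E ζ) ζ ≤
        C * (dE E ζ ^ (2 * α) *
          circIntOn (GammaSet E ζ)
            (fun ζ' => Real.log (dE E ζ / dE E ζ') / ‖ζ - ζ'‖ ^ 2)) :=
  statement5_general E hEc hEz hEcar α hα
end

section
/- Let (ζ_n)_{n≥1} be a sequence with 0 < ζ_n < 1/2 for all n, and let E = E_{(ζ_n)} be the associated generalized Cantor set. If limsup_{n→∞} ζ_n < 1/2, then E is a 𝒦-set. -/
/-!
Lift `E` to the `1`-periodic set of `t ∈ ℝ` with `e^{2πit} ∈ E`. A point of the lifted set lies,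
at every level `m`, in a basic interval of length `ζ₁⋯ζ_m`, right next to the gap of length
`ζ₁⋯ζ_m (1 - 2ζ_{m+1})` between the two children of that interval, and the gap misses the set.
Since `ζ_n ≤ ρ < 1/2` eventually, every point thus has, at each scale `r ≤ 1`, a gap of length
`≳ r` within distance `r`. So every interval of length `h ≤ 1` contains a point at distance `≳ h`
from the set, and since chord and arc length are comparable this is the `𝒦` inequality.
-/

open MeasureTheory Real Set

def HasNearbyGaps (T : Set ℝ) (κ : ℝ) : Prop :=
  ∀ s ∈ T, ∀ r, 0 < r → r ≤ 1 → ∃ u v, κ * r ≤ v - u ∧ (∀ y ∈ T, y ∉ Ioo u v) ∧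
    (|s - u| ≤ r ∨ |s - v| ≤ r)

def IsUniformlyPorous (T : Set ℝ) (c : ℝ) : Prop :=
  ∀ x h : ℝ, 0 < h → h ≤ 1 → ∃ p ∈ Ioc x (x + h), ∀ y ∈ T, c * h ≤ |p - y|

lemma IsUniformlyPorous.mono {S T : Set ℝ} {c : ℝ} (hT : IsUniformlyPorous T c) (hST : S ⊆ T) :
    IsUniformlyPorous S c := fun x h hh hh₁ =>
  (hT x h hh hh₁).imp fun _ ⟨hp, hpT⟩ => ⟨hp, fun y hy => hpT y (hST hy)⟩

/-- If the middle third of `(x, x + h]` misses `T`, its midpoint works; otherwise a gap near a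
point of `T` in the middle third stays inside `(x, x + h]`. -/
lemma HasNearbyGaps.isUniformlyPorous {T : Set ℝ} {κ : ℝ} (hgap : HasNearbyGaps T κ)
    (hκ : κ ∈ Icc 0 1) : IsUniformlyPorous T (κ / 12) := by
  intro x h hh hh₁
  by_cases hmid : ∃ s ∈ T, s ∈ Icc (x + h / 3) (x + 2 * h / 3)
  · obtain ⟨s, hsT, hs₁, hs₂⟩ := hmid
    obtain ⟨u, v, huv, hT, hs⟩ := hgap s hsT (h / 6) (by positivity) (by linarith)
    obtain ⟨p, hpu, hpv, hps⟩ :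
        ∃ p, u + κ * h / 12 ≤ p ∧ p ≤ v - κ * h / 12 ∧ |p - s| ≤ h / 4 := by
      obtain ⟨hκ₀, hκ₁⟩ := hκ
      rcases hs with hs | hs <;> rw [abs_le] at hs
      · exact ⟨_, le_rfl, by linarith, abs_le.2 ⟨by nlinarith, by nlinarith⟩⟩
      · exact ⟨_, by linarith, le_rfl, abs_le.2 ⟨by nlinarith, by nlinarith⟩⟩
    obtain ⟨hps₁, hps₂⟩ := abs_le.1 hps
    refine ⟨p, ⟨by linarith, by linarith⟩, fun y hy => ?_⟩
    have hy : y ≤ u ∨ v ≤ y := by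
      by_contra! h'
      exact hT y hy ⟨h'.1, h'.2⟩
    rcases hy with hy | hy
    · exact le_abs.2 (Or.inl (by linarith))
    · exact le_abs.2 (Or.inr (by linarith))
  · simp only [not_exists, not_and, mem_Icc, not_le] at hmid
    refine ⟨x + h / 2, ⟨by linarith, by linarith⟩, fun y hy => ?_⟩
    rcases lt_or_ge y (x + h / 3) with hy' | hy'
    · exact le_abs.2 (Or.inl (by nlinarith [hκ.2]))
    · exact le_abs.2 (Or.inr (by nlinarith [hκ.2, hmid y hy hy']))

lemma norm_cpt (θ : ℝ) : ‖cpt θ‖ = 1 := Complex.norm_exp_ofReal_mul_I θ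

lemma cpt_mem_circleT (θ : ℝ) : cpt θ ∈ circleT := mem_sphere_zero_iff_norm.2 (norm_cpt θ)

lemma exists_cpt_eq_of_mem_circleT {z : ℂ} (hz : z ∈ circleT) : ∃ β, cpt β = z :=
  ⟨z.arg, by simpa [cpt, mem_sphere_zero_iff_norm.1 hz] using Complex.norm_mul_exp_arg_mul_I z⟩

lemma cpt_add_two_pi_mul_int (θ : ℝ) (k : ℤ) : cpt (θ + 2 * π * k) = cpt θ := by
  rw [cpt, cpt, Complex.ofReal_add, add_mul, Complex.exp_add]
  convert mul_one _
  convert Complex.exp_int_mul_two_pi_mul_I k using 2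
  push_cast
  ring

lemma exists_int_eq_add_of_cpt_eq {s t : ℝ} (h : cpt (2 * π * s) = cpt (2 * π * t)) :
    ∃ k : ℤ, s = t + k := by
  obtain ⟨k, hk⟩ := Complex.exp_eq_exp_iff_exists_int.1 h
  have h' : ((2 * π * s : ℝ) : ℂ) = ((2 * π * (t + k) : ℝ) : ℂ) :=
    mul_right_cancel₀ Complex.I_ne_zero (by rw [hk]; push_cast; ring)
  exact ⟨k, mul_left_cancel₀ two_pi_pos.ne' (Complex.ofReal_injective h')⟩

lemma exists_int_mul_abs_le_norm_cpt_sub (θ β : ℝ) :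
    ∃ k : ℤ, 2 / π * |θ - β - 2 * π * k| ≤ ‖cpt θ - cpt β‖ := by
  refine ⟨toIocDiv two_pi_pos (-π) (θ - β), ?_⟩
  have h := Complex.mul_angle_le_norm_sub (norm_cpt θ) (norm_cpt β)
  rwa [cpt, cpt, Complex.angle_exp_exp, toIocMod, zsmul_eq_mul, mul_comm _ (2 * π)] at h

lemma four_mul_le_dE_cpt {E : Set ℂ} (hE : E.Nonempty) (hEc : E ⊆ circleT) {p δ : ℝ}
    (hp : ∀ t, cpt (2 * π * t) ∈ E → δ ≤ |p - t|) : 4 * δ ≤ dE E (cpt (2 * π * p)) := by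
  rw [dE, Metric.le_infDist hE]
  intro z hz
  obtain ⟨β, rfl⟩ := exists_cpt_eq_of_mem_circleT (hEc hz)
  obtain ⟨k, hk⟩ := exists_int_mul_abs_le_norm_cpt_sub (2 * π * p) β
  have hπ := pi_pos
  have hβ : 2 * π * (β / (2 * π) + k) = β + 2 * π * k := by field_simp
  have hδ := hp (β / (2 * π) + k) (by rwa [hβ, cpt_add_two_pi_mul_int])
  have habs : 2 / π * |2 * π * p - β - 2 * π * k| = 4 * |p - (β / (2 * π) + k)| := by
    rw [show 2 * π * p - β - 2 * π * k = 2 * π * (p - (β / (2 * π) + k)) by field_simp; ring,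
      abs_mul, abs_of_pos (by positivity : 0 < 2 * π)]
    field_simp
    ring
  rw [dist_eq_norm]
  linarith

lemma dE_cpt_le_arcSup {E : Set ℂ} (hE : E.Nonempty) (hEc : E ⊆ circleT) {a b θ : ℝ}
    (hθ : θ ∈ Ioc a b) : dE E (cpt θ) ≤ arcSup E a b := by
  obtain ⟨z, hz⟩ := hE
  refine le_csSup ⟨2, ?_⟩ (mem_image_of_mem _ hθ)
  rintro _ ⟨θ', -, rfl⟩
  calc dE E (cpt θ') ≤ dist (cpt θ') z := Metric.infDist_le_dist_of_mem hz
    _ ≤ ‖cpt θ'‖ + ‖z‖ := dist_le_norm_add_norm _ _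
    _ = 2 := by rw [norm_cpt, mem_sphere_zero_iff_norm.1 (hEc hz)]; norm_num

lemma kSet_of_isUniformlyPorous {E : Set ℂ} (hE : E.Nonempty) (hEc : E ⊆ circleT) {c : ℝ}
    (hc : 0 < c) (hT : IsUniformlyPorous {t | cpt (2 * π * t) ∈ E} c) : KSet E := by
  have hπ := pi_pos
  refine ⟨2 * c / π, by positivity, fun a b hab hba => ?_⟩
  obtain ⟨p, ⟨hp₁, hp₂⟩, hp⟩ := hT (a / (2 * π)) ((b - a) / (2 * π)) (by
    apply div_pos <;> linarith) ((div_le_one (by positivity)).2 (by linarith))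
  have hθ : 2 * π * p ∈ Ioc a b := by
    constructor
    · rwa [div_lt_iff₀' (by positivity)] at hp₁
    · rwa [← add_div, le_div_iff₀' (by positivity), add_sub_cancel] at hp₂
  calc 2 * c / π * (b - a) = 4 * (c * ((b - a) / (2 * π))) := by field_simp; ring
    _ ≤ dE E (cpt (2 * π * p)) := four_mul_le_dE_cpt hE hEc hp
    _ ≤ arcSup E a b := dE_cpt_le_arcSup hE hEc hθ

noncomputable section

namespace GenCantor

open Finset Filter Topology

variable {ξ : ℕ → ℝ}

def scale (ξ : ℕ → ℝ) (n : ℕ) : ℝ := ∏ k ∈ range n, ξ k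

def term (ξ : ℕ → ℝ) (ε : ℕ → Bool) (n : ℕ) : ℝ :=
  (if ε n then (1 : ℝ) else 0) * scale ξ n * (1 - ξ n)

def point (ξ : ℕ → ℝ) (ε : ℕ → Bool) : ℝ := ∑' n, term ξ ε n

/-- Left endpoint of the level-`n` basic interval `[left ξ ε n, left ξ ε n + scale ξ n]`
containing `point ξ ε`. -/
def left (ξ : ℕ → ℝ) (ε : ℕ → Bool) (n : ℕ) : ℝ := ∑ k ∈ range n, term ξ ε k

def liftSet (ξ : ℕ → ℝ) : Set ℝ := {y | ∃ (ε : ℕ → Bool) (k : ℤ), y = point ξ ε + k}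

@[simp] lemma scale_zero : scale ξ 0 = 1 := prod_range_zero _

lemma scale_succ (n : ℕ) : scale ξ (n + 1) = scale ξ n * ξ n := prod_range_succ _ _

@[simp] lemma left_zero (ε : ℕ → Bool) : left ξ ε 0 = 0 := sum_range_zero _

lemma left_succ (ε : ℕ → Bool) (n : ℕ) : left ξ ε (n + 1) = left ξ ε n + term ξ ε n :=
  sum_range_succ _ _

lemma term_eq (ε : ℕ → Bool) (n : ℕ) :
    term ξ ε n = if ε n then scale ξ n * (1 - ξ n) else 0 := by
  cases h : ε n <;> simp [term, h]

lemma scale_pos (hξ : ∀ n, 0 < ξ n) (n : ℕ) : 0 < scale ξ n := prod_pos fun k _ => hξ k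

section

variable (hξ : ∀ n, ξ n ∈ Icc (0 : ℝ) (1 / 2))
include hξ

lemma scale_nonneg (n : ℕ) : 0 ≤ scale ξ n := prod_nonneg fun k _ => (hξ k).1

lemma scale_antitone : Antitone (scale ξ) :=
  antitone_nat_of_succ_le fun n => by
    rw [scale_succ]
    exact mul_le_of_le_one_right (scale_nonneg hξ n) ((hξ n).2.trans (by norm_num))

lemma scale_le_one (n : ℕ) : scale ξ n ≤ 1 := scale_zero (ξ := ξ) ▸ scale_antitone hξ n.zero_le

lemma scale_le_half_pow (n : ℕ) : scale ξ n ≤ (1 / 2) ^ n := by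
  simpa [scale] using prod_le_prod (s := range n) (fun k _ => (hξ k).1) (fun k _ => (hξ k).2)

lemma term_nonneg (ε : ℕ → Bool) (n : ℕ) : 0 ≤ term ξ ε n := by
  rw [term_eq]
  split_ifs
  · exact mul_nonneg (scale_nonneg hξ n) (by linarith [(hξ n).2])
  · exact le_rfl

lemma left_mono (ε : ℕ → Bool) : Monotone (left ξ ε) :=
  monotone_nat_of_le_succ fun n => by
    rw [left_succ]
    linarith [term_nonneg hξ ε n]

lemma left_add_scale_antitone (ε : ℕ → Bool) : Antitone fun n => left ξ ε n + scale ξ n :=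
  antitone_nat_of_succ_le fun n => by
    have := scale_nonneg hξ n
    have := (hξ n).2
    simp only [left_succ, scale_succ, term_eq]
    split_ifs <;> nlinarith

lemma left_add_scale_le_one (ε : ℕ → Bool) (n : ℕ) : left ξ ε n + scale ξ n ≤ 1 := by
  simpa using left_add_scale_antitone hξ ε n.zero_le

lemma summable_term (ε : ℕ → Bool) : Summable (term ξ ε) :=
  summable_of_sum_range_le (c := 1) (term_nonneg hξ ε) fun n =>
    (le_add_of_nonneg_right (scale_nonneg hξ n)).trans (left_add_scale_le_one hξ ε n)

lemma point_mem_Icc (ε : ℕ → Bool) (n : ℕ) :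
    point ξ ε ∈ Icc (left ξ ε n) (left ξ ε n + scale ξ n) := by
  have hlim : Tendsto (left ξ ε) atTop (𝓝 (point ξ ε)) :=
    (summable_term hξ ε).hasSum.tendsto_sum_nat
  refine isClosed_Icc.mem_of_tendsto hlim
    (eventually_atTop.2 ⟨n, fun k hk => ⟨left_mono hξ ε hk, ?_⟩⟩)
  linarith [left_add_scale_antitone hξ ε hk, scale_nonneg hξ k]

/-- Basic intervals of the same level coincide or have disjoint interiors. -/
lemma left_eq_or_le_or_le (ε ε' : ℕ → Bool) (n : ℕ) :
    left ξ ε n = left ξ ε' n ∨ left ξ ε n + scale ξ n ≤ left ξ ε' n ∨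
      left ξ ε' n + scale ξ n ≤ left ξ ε n := by
  induction n with
  | zero => simp
  | succ n ih =>
    have hchild : scale ξ (n + 1) ≤ scale ξ n * (1 - ξ n) := by
      rw [scale_succ]
      nlinarith [scale_nonneg hξ n, (hξ n).2]
    have hε := left_add_scale_antitone hξ ε n.le_succ
    have hε' := left_add_scale_antitone hξ ε' n.le_succ
    have hm := left_mono hξ ε n.le_succ
    have hm' := left_mono hξ ε' n.le_succ
    rcases ih with h | h | h
    · rw [left_succ, left_succ, term_eq, term_eq, h]
      cases ε n <;> cases ε' n
      · exact Or.inl rfl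
      · exact Or.inr (Or.inl (by simpa using hchild))
      · exact Or.inr (Or.inr (by simpa using hchild))
      · exact Or.inl rfl
    · exact Or.inr (Or.inl (by linarith))
    · exact Or.inr (Or.inr (by linarith))

/-- The interval is the gap between the two children of the level-`n` basic interval of `ε`. -/
lemma point_notMem_gap (ε ε' : ℕ → Bool) (n : ℕ) :
    point ξ ε' ∉ Ioo (left ξ ε n + scale ξ (n + 1)) (left ξ ε n + scale ξ n * (1 - ξ n)) := by
  rintro ⟨h₁, h₂⟩
  have hξn := hξ n
  have hs := scale_nonneg hξ n
  obtain ⟨hn₁, hn₂⟩ := point_mem_Icc hξ ε' n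
  obtain ⟨hs₁, hs₂⟩ := point_mem_Icc hξ ε' (n + 1)
  rw [scale_succ] at h₁ hs₂
  rcases left_eq_or_le_or_le hξ ε ε' n with h | h | h
  · rw [left_succ, term_eq, ← h] at hs₁ hs₂
    split_ifs at hs₁ hs₂ <;> linarith
  · nlinarith
  · nlinarith

lemma point_add_int_notMem_gap (ε ε' : ℕ → Bool) (n : ℕ) (k : ℤ) :
    point ξ ε' + k ∉
      Ioo (left ξ ε n + scale ξ (n + 1)) (left ξ ε n + scale ξ n * (1 - ξ n)) := by
  rintro ⟨h₁, h₂⟩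
  obtain ⟨h₀, h₁'⟩ := point_mem_Icc hξ ε' 0
  simp only [left_zero, scale_zero, zero_add] at h₀ h₁'
  have hleft : 0 ≤ left ξ ε n := by simpa using left_mono hξ ε n.zero_le
  have hright := left_add_scale_le_one hξ ε n
  have hs := scale_nonneg hξ (n + 1)
  have hgap : scale ξ n * (1 - ξ n) ≤ scale ξ n := by nlinarith [scale_nonneg hξ n, (hξ n).1]
  obtain hk | rfl | hk := lt_trichotomy k 0
  · have : (k : ℝ) ≤ -1 := by exact_mod_cast Int.le_sub_one_of_lt hk
    linarith
  · exact point_notMem_gap hξ ε ε' n ⟨by simpa using h₁, by simpa using h₂⟩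
  · have : (1 : ℝ) ≤ k := by exact_mod_cast hk
    linarith

lemma point_near_gap (ε : ℕ → Bool) (n : ℕ) :
    |point ξ ε - (left ξ ε n + scale ξ (n + 1))| ≤ scale ξ (n + 1) ∨
      |point ξ ε - (left ξ ε n + scale ξ n * (1 - ξ n))| ≤ scale ξ (n + 1) := by
  obtain ⟨h₁, h₂⟩ := point_mem_Icc hξ ε (n + 1)
  rw [left_succ, term_eq] at h₁ h₂
  split_ifs at h₁ h₂
  · exact Or.inr (abs_le.2 ⟨by linarith [scale_nonneg hξ (n + 1)], by linarith⟩)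
  · exact Or.inl (abs_le.2 ⟨by linarith, by linarith [scale_nonneg hξ (n + 1)]⟩)

lemma exists_scale_bracket (N : ℕ) {r : ℝ} (hr : 0 < r) :
    ∃ m ≥ N, scale ξ (m + 1) ≤ r ∧ min (scale ξ N) r ≤ scale ξ m := by
  by_cases hN : scale ξ N ≤ r
  · exact ⟨N, le_rfl, (scale_antitone hξ N.le_succ).trans hN, min_le_left _ _⟩
  have hex : ∃ n, scale ξ n ≤ r := by
    obtain ⟨n, hn⟩ := exists_pow_lt_of_lt_one hr (by norm_num : (1 / 2 : ℝ) < 1)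
    exact ⟨n, (scale_le_half_pow hξ n).trans hn.le⟩
  obtain ⟨m, hm⟩ : ∃ m, Nat.find hex = m + 1 :=
    Nat.exists_eq_succ_of_ne_zero fun h =>
      hN ((scale_antitone hξ N.zero_le).trans (h ▸ Nat.find_spec hex))
  have hmN : N ≤ m := by
    by_contra! h
    exact hN ((scale_antitone hξ (hm ▸ h : Nat.find hex ≤ N)).trans (Nat.find_spec hex))
  refine ⟨m, hmN, hm ▸ Nat.find_spec hex, (min_le_right _ _).trans ?_⟩
  exact (not_le.1 (Nat.find_min hex (hm ▸ m.lt_succ_self))).le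

/-- The gap is the one at the level `m ≥ N` where the basic intervals shrink past `r`. -/
lemma hasNearbyGaps_liftSet {ρ : ℝ} (hρ : ρ < 1 / 2) {N : ℕ} (hN : ∀ n ≥ N, ξ n ≤ ρ) :
    HasNearbyGaps (liftSet ξ) (scale ξ N * (1 - 2 * ρ)) := by
  rintro _ ⟨ε, k, rfl⟩ r hr hr₁
  obtain ⟨m, hmN, hm₁, hm⟩ := exists_scale_bracket hξ N hr
  refine ⟨left ξ ε m + scale ξ (m + 1) + k, left ξ ε m + scale ξ m * (1 - ξ m) + k, ?_, ?_, ?_⟩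
  · have hmin : scale ξ N * r ≤ min (scale ξ N) r :=
      le_min (mul_le_of_le_one_right (scale_nonneg hξ N) hr₁)
        (mul_le_of_le_one_left hr.le (scale_le_one hξ N))
    calc scale ξ N * (1 - 2 * ρ) * r = scale ξ N * r * (1 - 2 * ρ) := by ring
      _ ≤ scale ξ m * (1 - 2 * ρ) := by
        gcongr
        · linarith
        · exact hmin.trans hm
      _ ≤ scale ξ m * (1 - 2 * ξ m) := by
        gcongr
        · exact scale_nonneg hξ m
        · exact hN m hmN
      _ = _ := by rw [scale_succ]; ring
  · rintro _ ⟨ε', k', rfl⟩ ⟨h₁, h₂⟩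
    refine point_add_int_notMem_gap hξ ε ε' m (k' - k) ⟨?_, ?_⟩ <;> push_cast <;> linarith
  · simp only [add_sub_add_right_eq_sub]
    exact (point_near_gap hξ ε m).imp hm₁.trans' hm₁.trans'

end

end GenCantor

end

open GenCantor in
lemma mem_gCantorSet_iff {ξ : ℕ → ℝ} {z : ℂ} :
    z ∈ gCantorSet ξ ↔ ∃ ε, cpt (2 * π * point ξ ε) = z := by
  refine exists_congr fun ε => ?_
  rw [eq_comm, cpt, point]
  simp only [term, scale]
  push_cast
  ring_nf

lemma gCantorSet_subset_circleT (ξ : ℕ → ℝ) : gCantorSet ξ ⊆ circleT := by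
  rintro z hz
  obtain ⟨ε, rfl⟩ := mem_gCantorSet_iff.1 hz
  exact cpt_mem_circleT _

lemma gCantorSet_nonempty (ξ : ℕ → ℝ) : (gCantorSet ξ).Nonempty :=
  ⟨_, mem_gCantorSet_iff.2 ⟨fun _ => false, rfl⟩⟩

lemma preimage_cpt_gCantorSet_subset_liftSet (ξ : ℕ → ℝ) :
    {t | cpt (2 * π * t) ∈ gCantorSet ξ} ⊆ GenCantor.liftSet ξ := by
  intro t ht
  obtain ⟨ε, hε⟩ := mem_gCantorSet_iff.1 ht
  obtain ⟨k, hk⟩ := exists_int_eq_add_of_cpt_eq hε.symm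
  exact ⟨ε, k, hk⟩

/-- A generalized Cantor set with `limsup ζ_n < 1/2` is a `𝒦`-set. -/
theorem statement9 (ξ : ℕ → ℝ) (hξ : ∀ n, ξ n ∈ Set.Ioo (0:ℝ) (1/2))
    (hlim : Filter.limsup ξ Filter.atTop < 1/2) :
    KSet (gCantorSet ξ) := by
  have hξ' : ∀ n, ξ n ∈ Icc (0 : ℝ) (1 / 2) := fun n => Ioo_subset_Icc_self (hξ n)
  obtain ⟨ρ, hlimρ, hρ⟩ := exists_between hlim
  obtain ⟨N, hN⟩ := Filter.eventually_atTop.1 <| Filter.eventually_lt_of_limsup_lt hlimρ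
    (Filter.isBoundedUnder_of ⟨1 / 2, fun n => (hξ n).2.le⟩)
  have hρ₀ : 0 < ρ := (hξ N).1.trans (hN N le_rfl)
  have hκ : GenCantor.scale ξ N * (1 - 2 * ρ) ∈ Icc 0 1 :=
    ⟨mul_nonneg (GenCantor.scale_nonneg hξ' N) (by linarith),
      mul_le_one₀ (GenCantor.scale_le_one hξ' N) (by linarith) (by linarith)⟩
  have hporous :=
    (GenCantor.hasNearbyGaps_liftSet hξ' hρ fun n hn => (hN n hn).le).isUniformlyPorous hκ
  refine kSet_of_isUniformlyPorous (gCantorSet_nonempty ξ) (gCantorSet_subset_circleT ξ) ?_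
    (hporous.mono (preimage_cpt_gCantorSet_subset_liftSet ξ))
  exact div_pos (mul_pos (GenCantor.scale_pos (fun n => (hξ n).1) N) (by linarith)) (by norm_num)
end
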